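/- Let q be a prime power coprime to n, γ ∈ ℤ/nℤ. Every equal-difference decomposition of c_{n/q}(γ) all of whose parts have the same size is of the form c_{n/q}(γ) = ⊔_{j=0}^{t−1} c_{n/q^t}(γ q^j), where t = τ/|c_{n/q^t}(γ q^j)| is a multiple of ω_γ and a divisor of τ = |c_{n/q}(γ)|. -/

import Mathlib

/-!
Equal-difference subsets of size `μ` are exactly the fibres of `y ↦ μ y`, so an equal-size
decomposition of `c_{n/q}(γ)` cuts the coset along the fibres of multiplication by `μ`. This map
commutes with multiplication by `q`, so the fibre of `γ q^j` contains `γ q^l` iff `l ≡ j` modulo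
the period `t` of `μ γ` under `q`: the parts are the `q^t`-cosets of `γ q^j`, `j < t`.

For `ω_γ ∣ t`: the `q^t`-coset of `γ`, being a fibre, is closed under
`x ↦ x + k (γ q^t - γ)`. Read modulo `n_γ`, the additive order of `γ`, this says that the
powers of `s = q^t` cover `1 + ℤ (s - 1)`. Modulo a prime `p ∣ n_γ` this forces `s ≡ 1`, since
otherwise some power of `s` would vanish, so `ord_{rad n_γ}(q) ∣ t`; modulo `8` it excludes
`s ≡ 3 (mod 4)`, which gives the extra factor `2`.
-/

/-- The `q`-cyclotomic coset of `γ` modulo `n`, i.e. `{γ q^j : j ≥ 0} ⊆ ℤ/nℤ`. -/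
def coset (n q : ℕ) (γ : ZMod n) : Set (ZMod n) := {x | ∃ j : ℕ, x = γ * (q : ZMod n) ^ j}

/-- `τ` is the size of the coset: the least positive `t` with `γ q^t ≡ γ (mod n)`. -/
def cosetSize (n q : ℕ) (γ : ZMod n) (τ : ℕ) : Prop :=
  IsLeast {t : ℕ | 0 < t ∧ γ * (q : ZMod n) ^ t = γ} τ

/-- The arithmetic progression `{δ + k (n/μ) : 0 ≤ k < μ}` in `ℤ/nℤ`. -/
def progression (n : ℕ) (δ : ZMod n) (μ : ℕ) : Set (ZMod n) :=
  {x | ∃ k < μ, x = δ + ((k * (n / μ) : ℕ) : ZMod n)}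

/-- The coset `c_{n/q}(γ)` is of equal difference. -/
def IsEqDiffCoset (n q : ℕ) (γ : ZMod n) : Prop :=
  ∃ τ : ℕ, cosetSize n q γ τ ∧ τ ∣ n ∧ coset n q γ = progression n γ τ

def rad (m : ℕ) : ℕ := ∏ p ∈ m.primeFactors, p

/-- `ω_γ`: twice the order of `q` modulo `rad(n_γ)` if `q^(ord) ≡ 3 (mod 4)` and
`8 ∣ n_γ`, and the order itself otherwise. -/
noncomputable def omegaGamma (n q : ℕ) (γ : ZMod n) : ℕ :=
  if q ^ orderOf (q : ZMod (rad (n / Nat.gcd γ.val n))) % 4 = 3 ∧ 8 ∣ n / Nat.gcd γ.val n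
  then 2 * orderOf (q : ZMod (rad (n / Nat.gcd γ.val n)))
  else orderOf (q : ZMod (rad (n / Nat.gcd γ.val n)))

/-- `E` is an equal-difference subset of `ℤ/nℤ`: an arithmetic progression of some size
`μ ∣ n` with common difference `n/μ`. -/
def EqDiffSubset (n : ℕ) (E : Set (ZMod n)) : Prop :=
  ∃ δ : ZMod n, ∃ μ : ℕ, 0 < μ ∧ μ ∣ n ∧ E = progression n δ μ

/-- `P` is an equal-difference decomposition of `c_{n/q}(γ)`: a partition of the coset
into nonempty pairwise disjoint equal-difference subsets. -/
def IsEqDiffDecomp (n q : ℕ) (γ : ZMod n) (P : Set (Set (ZMod n))) : Prop :=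
  (∀ E ∈ P, EqDiffSubset n E) ∧ (⋃₀ P = coset n q γ) ∧
    P.PairwiseDisjoint id ∧ ∅ ∉ P

def Coarser (n : ℕ) (P₁ P₂ : Set (Set (ZMod n))) : Prop :=
  ∀ E ∈ P₂, ∃ F ∈ P₁, E ⊆ F

open Function

theorem Function.iterate_eq_iterate_iff_modEq {α : Type*} {f : α → α} {x : α}
    (hx : x ∈ periodicPts f) {i j : ℕ} :
    f^[i] x = f^[j] x ↔ i ≡ j [MOD minimalPeriod f x] := by
  have hpos := minimalPeriod_pos_of_mem_periodicPts hx
  rw [← iterate_mod_minimalPeriod_eq, ← iterate_mod_minimalPeriod_eq (n := j),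
    iterate_eq_iterate_iff_of_lt_minimalPeriod (Nat.mod_lt _ hpos) (Nat.mod_lt _ hpos)]
  rfl

theorem Function.ncard_range_iterate {α : Type*} {f : α → α} {x : α}
    (hx : x ∈ periodicPts f) :
    (Set.range fun i => f^[i] x).ncard = minimalPeriod f x := by
  have hrange : (Set.range fun i => f^[i] x) = (f^[·] x) '' Set.Iio (minimalPeriod f x) := by
    refine (Set.image_subset_range _ _).antisymm' ?_
    rintro _ ⟨i, rfl⟩
    exact ⟨i % minimalPeriod f x, Nat.mod_lt _ (minimalPeriod_pos_of_mem_periodicPts hx),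
      iterate_mod_minimalPeriod_eq⟩
  rw [hrange, iterate_injOn_Iio_minimalPeriod.ncard_image, Set.ncard_Iio_nat]

theorem Function.exists_iterate_mul_add_eq_iff {α : Type*} {f : α → α} {x : α}
    (hx : x ∈ periodicPts f) {t : ℕ} (ht : t ∣ minimalPeriod f x) {j l : ℕ} :
    (∃ i, f^[t * i + j] x = f^[l] x) ↔ l ≡ j [MOD t] := by
  set σ := minimalPeriod f x
  constructor
  · rintro ⟨i, hi⟩
    have := ((iterate_eq_iterate_iff_modEq hx).1 hi).of_dvd ht
    rw [Nat.ModEq, Nat.mul_add_mod] at this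
    exact this.symm
  · intro hlj
    have hj : j ≤ σ * j := Nat.le_mul_of_pos_left j (minimalPeriod_pos_of_mem_periodicPts hx)
    -- shifting `l` by the multiple `σ * j` of the period makes it at least `j`
    have hshift : l + σ * j ≡ j [MOD t] := by
      obtain ⟨c, hc⟩ := ht
      rw [Nat.ModEq, hc, mul_assoc, Nat.add_mul_mod_self_left]
      exact hlj
    obtain ⟨i, hi⟩ := (Nat.modEq_iff_dvd' (by omega)).1 hshift.symm
    refine ⟨i, (iterate_eq_iterate_iff_modEq hx).2 ?_⟩
    rw [show t * i + j = l + σ * j by omega]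
    exact Nat.add_mul_mod_self_left l σ j

theorem range_eq_setOf_exists_lt_of_mod_eq {β : Type*} {g : ℕ → β} {t : ℕ} (ht : 0 < t)
    (hg : ∀ j, g (j % t) = g j) : Set.range g = {b | ∃ j < t, b = g j} := by
  ext b
  constructor
  · rintro ⟨j, rfl⟩
    exact ⟨j % t, Nat.mod_lt j ht, (hg j).symm⟩
  · rintro ⟨j, -, rfl⟩
    exact ⟨j, rfl⟩

theorem minimalPeriod_mul_right_dvd {M : Type*} [CommMonoid M] (c x u : M) :
    minimalPeriod (· * u) (c * x) ∣ minimalPeriod (· * u) x :=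
  ((isPeriodicPt_minimalPeriod _ x).map fun y => (mul_assoc c y u).symm).minimalPeriod_dvd

section CyclotomicCoset

variable {n q : ℕ}

theorem coset_eq_range_iterate (x : ZMod n) :
    coset n q x = Set.range fun i => (· * (q : ZMod n))^[i] x := by
  ext y
  simp [coset, eq_comm]

theorem minimalPeriod_eq_of_cosetSize {x : ZMod n} {τ : ℕ} (h : cosetSize n q x τ) :
    minimalPeriod (· * (q : ZMod n)) x = τ := by
  have hper : IsPeriodicPt (· * (q : ZMod n)) τ x := by
    simpa [IsPeriodicPt, IsFixedPt] using h.1.2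
  refine le_antisymm (Nat.le_of_dvd h.1.1 hper.minimalPeriod_dvd)
    (h.2 ⟨hper.minimalPeriod_pos h.1.1, ?_⟩)
  rw [← mul_right_iterate_apply]
  exact iterate_minimalPeriod

theorem ncard_coset_pow {x : ZMod n} (hx : x ∈ periodicPts (· * (q : ZMod n))) {t : ℕ}
    (ht : t ∣ minimalPeriod (· * (q : ZMod n)) x) (ht0 : t ≠ 0) (j : ℕ) :
    (coset n (q ^ t) (x * (q : ZMod n) ^ j)).ncard = minimalPeriod (· * (q : ZMod n)) x / t := by
  set f : ZMod n → ZMod n := (· * (q : ZMod n))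
  have hperiod : minimalPeriod f^[t] (f^[j] x) = minimalPeriod f x / t := by
    rw [minimalPeriod_iterate_eq_div_gcd ht0, minimalPeriod_apply_iterate hx,
      Nat.gcd_eq_right ht]
  have hpos : 0 < minimalPeriod f x / t :=
    Nat.div_pos (Nat.le_of_dvd (minimalPeriod_pos_of_mem_periodicPts hx) ht)
      (Nat.pos_of_ne_zero ht0)
  rw [coset_eq_range_iterate, Nat.cast_pow, ← mul_right_iterate, ← mul_right_iterate_apply,
    ncard_range_iterate (minimalPeriod_pos_iff_mem_periodicPts.1 (hperiod ▸ hpos)), hperiod]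

end CyclotomicCoset

def mulFiber (n μ : ℕ) (x : ZMod n) : Set (ZMod n) := {y | (μ : ZMod n) * y = μ * x}

section Progression

variable {n μ : ℕ}

theorem natCast_mul_eq_zero_iff (hn : 0 < n) (hμ : μ ∣ n) (z : ZMod n) :
    (μ : ZMod n) * z = 0 ↔ ∃ k < μ, z = ((k * (n / μ) : ℕ) : ZMod n) := by
  have : NeZero n := ⟨hn.ne'⟩
  obtain ⟨d, rfl⟩ := hμ
  have hμ0 : 0 < μ := Nat.pos_of_mul_pos_right hn
  rw [Nat.mul_div_cancel_left d hμ0]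
  constructor
  · intro h
    have hdvd : μ * d ∣ μ * z.val := by
      rw [← ZMod.natCast_eq_zero_iff, Nat.cast_mul, ZMod.natCast_zmod_val, h]
    obtain ⟨k, hk⟩ := Nat.dvd_of_mul_dvd_mul_left hμ0 hdvd
    refine ⟨k, ?_, ?_⟩
    · have := ZMod.val_lt z
      rw [hk, mul_comm] at this
      exact Nat.lt_of_mul_lt_mul_right this
    · rw [← ZMod.natCast_zmod_val z, hk, mul_comm d k]
  · rintro ⟨k, -, rfl⟩
    rw [← Nat.cast_mul, ZMod.natCast_eq_zero_iff]
    exact ⟨k, by ring⟩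

theorem progression_eq_mulFiber (hn : 0 < n) (hμ : μ ∣ n) (δ : ZMod n) :
    progression n δ μ = mulFiber n μ δ := by
  ext y
  simp only [progression, mulFiber, Set.mem_ofPred_eq]
  rw [← sub_eq_zero, ← mul_sub, natCast_mul_eq_zero_iff hn hμ]
  simp only [sub_eq_iff_eq_add']

theorem ncard_progression (hn : 0 < n) (hμ : μ ∣ n) (δ : ZMod n) :
    (progression n δ μ).ncard = μ := by
  obtain ⟨d, rfl⟩ := hμ
  have hμ0 : 0 < μ := Nat.pos_of_mul_pos_right hn
  have himage : progression (μ * d) δ μ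
      = (fun k : ℕ => δ + ((k * d : ℕ) : ZMod (μ * d))) '' Set.Iio μ := by
    ext y
    simp [progression, Nat.mul_div_cancel_left d hμ0, eq_comm]
  rw [himage, Set.InjOn.ncard_image, Set.ncard_Iio_nat]
  intro k hk l hl hkl
  have hd : 0 < d := Nat.pos_of_mul_pos_left hn
  have hval := congrArg ZMod.val (add_left_cancel hkl)
  rw [ZMod.val_natCast_of_lt (Nat.mul_lt_mul_of_pos_right hk hd),
    ZMod.val_natCast_of_lt (Nat.mul_lt_mul_of_pos_right hl hd)] at hval
  exact Nat.eq_of_mul_eq_mul_right hd hval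

theorem EqDiffSubset.eq_mulFiber (hn : 0 < n) {E : Set (ZMod n)} (hE : EqDiffSubset n E)
    (hcard : E.ncard = μ) {x : ZMod n} (hx : x ∈ E) : E = mulFiber n μ x := by
  obtain ⟨δ, μ', -, hμ', rfl⟩ := hE
  rw [ncard_progression hn hμ'] at hcard
  subst hcard
  rw [progression_eq_mulFiber hn hμ'] at hx ⊢
  ext y
  simp only [mulFiber, Set.mem_ofPred_eq] at hx ⊢
  rw [hx]

end Progression

section Decomposition

variable {n q μ : ℕ} {γ : ZMod n}

theorem coset_pow_eq_range_iterate (x : ZMod n) (t j : ℕ) :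
    coset n (q ^ t) (x * (q : ZMod n) ^ j) =
      Set.range fun i => (· * (q : ZMod n))^[t * i + j] x := by
  simp_rw [coset_eq_range_iterate, Nat.cast_pow, ← mul_right_iterate, ← mul_right_iterate_apply,
    ← iterate_mul, ← iterate_add_apply]

theorem eq_range_mulFiber {P : Set (Set (ZMod n))}
    (hfib : ∀ E ∈ P, ∀ x ∈ E, E = mulFiber n μ x) (hunion : ⋃₀ P = coset n q γ)
    (hne : ∅ ∉ P) : P = Set.range fun j : ℕ => mulFiber n μ (γ * (q : ZMod n) ^ j) := by
  ext E
  constructor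
  · intro hE
    obtain ⟨x, hx⟩ := Set.nonempty_iff_ne_empty.2 (ne_of_mem_of_not_mem hE hne)
    obtain ⟨j, rfl⟩ : x ∈ coset n q γ := hunion ▸ ⟨E, hE, hx⟩
    exact ⟨j, (hfib E hE _ hx).symm⟩
  · rintro ⟨j, rfl⟩
    obtain ⟨E, hE, hx⟩ : γ * (q : ZMod n) ^ j ∈ ⋃₀ P := hunion ▸ ⟨j, rfl⟩
    beta_reduce
    rwa [← hfib E hE _ hx]

theorem mul_pow_mem_mulFiber_iff (l j : ℕ) :
    γ * (q : ZMod n) ^ l ∈ mulFiber n μ (γ * (q : ZMod n) ^ j) ↔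
      (· * (q : ZMod n))^[l] (μ * γ) = (· * (q : ZMod n))^[j] (μ * γ) := by
  simp [mulFiber, mul_assoc]

theorem mulFiber_mul_pow_mod (j : ℕ) :
    mulFiber n μ (γ * (q : ZMod n) ^ (j % minimalPeriod (· * (q : ZMod n)) (μ * γ))) =
      mulFiber n μ (γ * (q : ZMod n) ^ j) := by
  rw [mulFiber, mulFiber, ← mul_assoc, ← mul_assoc, ← mul_right_iterate_apply,
    ← mul_right_iterate_apply, iterate_mod_minimalPeriod_eq]

theorem mulFiber_eq_coset_pow (hγ : γ ∈ periodicPts (· * (q : ZMod n))) {j : ℕ}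
    (hsub : mulFiber n μ (γ * (q : ZMod n) ^ j) ⊆ coset n q γ) :
    mulFiber n μ (γ * (q : ZMod n) ^ j) =
      coset n (q ^ minimalPeriod (· * (q : ZMod n)) (μ * γ)) (γ * (q : ZMod n) ^ j) := by
  set f : ZMod n → ZMod n := (· * (q : ZMod n))
  have hμγ : (μ : ZMod n) * γ ∈ periodicPts f :=
    Semiconj.mapsTo_periodicPts (fun y => (mul_assoc _ y _).symm) hγ
  have hmem : ∀ l, γ * (q : ZMod n) ^ l ∈ mulFiber n μ (γ * (q : ZMod n) ^ j) ↔
      l ≡ j [MOD minimalPeriod f (μ * γ)] := fun l =>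
    (mul_pow_mem_mulFiber_iff l j).trans (iterate_eq_iterate_iff_modEq hμγ)
  rw [coset_pow_eq_range_iterate]
  ext y
  constructor
  · intro hy
    obtain ⟨l, rfl⟩ : y ∈ Set.range fun l => f^[l] γ := coset_eq_range_iterate γ ▸ hsub hy
    exact (exists_iterate_mul_add_eq_iff hγ (minimalPeriod_mul_right_dvd _ _ _)).2
      ((hmem l).1 (by simpa [f] using hy))
  · rintro ⟨i, rfl⟩
    simpa [f, Nat.ModEq, Nat.mul_add_mod] using hmem (minimalPeriod f (μ * γ) * i + j)

theorem mul_one_add_mem_mulFiber (k : ℤ) :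
    γ * (1 + k * ((q : ZMod n) ^ minimalPeriod (· * (q : ZMod n)) (μ * γ) - 1)) ∈
      mulFiber n μ γ := by
  have hperiod :
      (μ : ZMod n) * γ * q ^ minimalPeriod (· * (q : ZMod n)) (μ * γ) = μ * γ := by
    rw [← mul_right_iterate_apply]
    exact iterate_minimalPeriod
  change (μ : ZMod n) * _ = _
  linear_combination k * hperiod

end Decomposition

section Omega

theorem eq_one_of_forall_exists_pow_eq {p : ℕ} [Fact p.Prime] {s : ZMod p} (hs : s ≠ 0)
    (h : ∀ k : ℤ, ∃ i : ℕ, s ^ i = 1 + k * (s - 1)) : s = 1 := by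
  by_contra hs1
  -- otherwise `k = -(s - 1)⁻¹` makes a power of `s` vanish
  obtain ⟨i, hi⟩ := h (-(s - 1)⁻¹).val
  rw [Int.cast_natCast, ZMod.natCast_zmod_val, neg_mul, inv_mul_cancel₀ (sub_ne_zero.2 hs1),
    add_neg_cancel] at hi
  exact pow_ne_zero i hs hi

theorem not_forall_exists_pow_eq_of_mod_four_eq_three {x w : ℕ} (hx : x % 4 = 3) (hw : Odd w) :
    ¬ ∀ k : ℤ, ∃ i : ℕ, ((x : ZMod 8) ^ w) ^ i = 1 + k * ((x : ZMod 8) ^ w - 1) := by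
  have hx8 : (x : ZMod 8) = 3 ∨ (x : ZMod 8) = 7 := by
    rw [← ZMod.natCast_mod]
    rcases (by omega : x % 8 = 3 ∨ x % 8 = 7) with h | h <;> simp [h]
  have hsq : (x : ZMod 8) ^ 2 = 1 := by rcases hx8 with h | h <;> rw [h] <;> rfl
  obtain ⟨a, rfl⟩ := hw
  rw [pow_succ, pow_mul, hsq, one_pow, one_mul]
  -- take `k = 2`: modulo 8 the powers of `x` are `1` and `x`, and `2 x - 1` is neither
  intro h
  obtain ⟨i, hi⟩ := h 2
  rw [← Nat.mod_add_div i 2, pow_add, pow_mul, hsq, one_pow, mul_one] at hi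
  have : i % 2 < 2 := Nat.mod_lt _ two_pos
  interval_cases i % 2 <;> rcases hx8 with h | h <;> rw [h] at hi <;> revert hi <;> decide

theorem natCast_pow_eq_one_of_forall_prime {m q t : ℕ}
    (h : ∀ p ∈ m.primeFactors, (q : ZMod p) ^ t = 1) : (q : ZMod (rad m)) ^ t = 1 := by
  have key : ∀ r : ℕ, (q : ZMod r) ^ t = 1 ↔ r ∣ ((q : ℤ) ^ t - 1).natAbs := fun r => by
    rw [← Int.natCast_dvd, ← ZMod.intCast_zmod_eq_zero_iff_dvd, ← sub_eq_zero]
    push_cast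
    rfl
  rw [key, rad]
  exact Finset.prod_primes_dvd _ (fun p hp => (Nat.prime_of_mem_primeFactors hp).prime)
    fun p hp => (key p).1 (h p hp)

noncomputable def omegaOf (m q : ℕ) : ℕ :=
  if q ^ orderOf (q : ZMod (rad m)) % 4 = 3 ∧ 8 ∣ m
  then 2 * orderOf (q : ZMod (rad m))
  else orderOf (q : ZMod (rad m))

theorem omegaOf_dvd {m q t : ℕ} (hco : q.Coprime m)
    (h : ∀ k : ℤ, ∃ i : ℕ, ((q : ZMod m) ^ t) ^ i = 1 + k * ((q : ZMod m) ^ t - 1)) :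
    omegaOf m q ∣ t := by
  have hmod : ∀ d, d ∣ m → ∀ k : ℤ, ∃ i : ℕ,
      ((q : ZMod d) ^ t) ^ i = 1 + k * ((q : ZMod d) ^ t - 1) :=
    fun d hd k => (h k).imp fun i hi => by
      simpa only [map_pow, map_add, map_mul, map_sub, map_one, map_natCast, map_intCast] using
        congrArg (ZMod.castHom hd (ZMod d)) hi
  have hord : orderOf (q : ZMod (rad m)) ∣ t := by
    refine orderOf_dvd_of_pow_eq_one (natCast_pow_eq_one_of_forall_prime fun p hp => ?_)
    have hpm := Nat.dvd_of_mem_primeFactors hp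
    have hprime := Nat.prime_of_mem_primeFactors hp
    have := Fact.mk hprime
    refine eq_one_of_forall_exists_pow_eq (pow_ne_zero _ ?_) (hmod p hpm)
    rw [Ne, ZMod.natCast_eq_zero_iff]
    exact fun hpq => hprime.one_lt.ne' (Nat.eq_one_of_dvd_coprimes hco hpq hpm)
  unfold omegaOf
  split_ifs with h48
  · obtain ⟨w, rfl⟩ := hord
    obtain ⟨a, rfl⟩ : Even w := Nat.not_odd_iff_even.1 fun hw =>
      not_forall_exists_pow_eq_of_mod_four_eq_three h48.1 hw (by simpa [pow_mul] using hmod 8 h48.2)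
    exact ⟨a, by ring⟩
  · exact hord

theorem mul_intCast_eq_mul_intCast_iff {R : Type*} [CommRing R] (γ : R) (a b : ℤ) :
    γ * a = γ * b ↔ (a : ZMod (addOrderOf γ)) = b := by
  rw [ZMod.intCast_eq_intCast_iff_dvd_sub, addOrderOf_dvd_iff_zsmul_eq_zero, zsmul_eq_mul,
    Int.cast_sub, sub_mul, sub_eq_zero, mul_comm (b : R), mul_comm (a : R), eq_comm]

theorem omegaGamma_dvd {n q t : ℕ} [NeZero n] {γ : ZMod n} (hco : q.Coprime n)
    (h : ∀ k : ℤ, γ * (1 + k * ((q : ZMod n) ^ t - 1)) ∈ coset n (q ^ t) γ) :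
    omegaGamma n q γ ∣ t := by
  have hm : addOrderOf γ = n / Nat.gcd γ.val n := by
    conv_lhs => rw [← ZMod.natCast_zmod_val γ]
    rw [ZMod.addOrderOf_coe _ (NeZero.ne n), Nat.gcd_comm]
  change omegaOf (n / Nat.gcd γ.val n) q ∣ t
  rw [← hm]
  refine omegaOf_dvd (hco.coprime_dvd_right (hm ▸ Nat.div_dvd_of_dvd (Nat.gcd_dvd_right _ _)))
    fun k => ?_
  obtain ⟨i, hi⟩ := h k
  push_cast at hi
  refine ⟨i, ?_⟩
  simpa using (mul_intCast_eq_mul_intCast_iff γ (((q : ℤ) ^ t) ^ i)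
    (1 + k * ((q : ℤ) ^ t - 1))).1 (by push_cast; exact hi.symm)

end Omega

theorem equal_size_decomposition_general (n q τ : ℕ) (hn : 0 < n)
    (hco : Nat.Coprime q n) (γ : ZMod n)
    (hτ : cosetSize n q γ τ) (P : Set (Set (ZMod n))) (hP : IsEqDiffDecomp n q γ P)
    (hsame : ∀ E ∈ P, ∀ F ∈ P, E.ncard = F.ncard) :
    ∃ t : ℕ, omegaGamma n q γ ∣ t ∧ t ∣ τ ∧ (∀ E ∈ P, E.ncard = τ / t) ∧
      P = {E | ∃ j < t, E = coset n (q ^ t) (γ * (q : ZMod n) ^ j)} := by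
  have : NeZero n := ⟨hn.ne'⟩
  obtain ⟨hparts, hunion, -, hne⟩ := hP
  obtain ⟨E₀, hE₀, -⟩ : γ ∈ ⋃₀ P := hunion ▸ ⟨0, by simp⟩
  set μ := E₀.ncard
  have hrange := eq_range_mulFiber (μ := μ)
    (fun E hE x hx => (hparts E hE).eq_mulFiber hn (hsame E hE E₀ hE₀) hx) hunion hne
  have hperiod := minimalPeriod_eq_of_cosetSize hτ
  have hγ : γ ∈ periodicPts (· * (q : ZMod n)) :=
    minimalPeriod_pos_iff_mem_periodicPts.1 (hperiod ▸ hτ.1.1)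
  set t := minimalPeriod (· * (q : ZMod n)) (μ * γ)
  have htτ : t ∣ τ := hperiod ▸ minimalPeriod_mul_right_dvd _ _ _
  have ht : 0 < t := Nat.pos_of_dvd_of_pos htτ hτ.1.1
  have hcoset (j : ℕ) :
      mulFiber n μ (γ * (q : ZMod n) ^ j) = coset n (q ^ t) (γ * (q : ZMod n) ^ j) :=
    mulFiber_eq_coset_pow hγ (hunion ▸ Set.subset_sUnion_of_mem (hrange ▸ ⟨j, rfl⟩))
  have hP : P = {E | ∃ j < t, E = coset n (q ^ t) (γ * (q : ZMod n) ^ j)} := by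
    rw [hrange, range_eq_setOf_exists_lt_of_mod_eq ht fun j => mulFiber_mul_pow_mod (μ := μ) j]
    simp only [hcoset]
  refine ⟨t, omegaGamma_dvd hco fun k => ?_, htτ, ?_, hP⟩
  · have h0 := hcoset 0
    rw [pow_zero, mul_one] at h0
    exact h0 ▸ mul_one_add_mem_mulFiber k
  · rintro E hE
    obtain ⟨j, -, rfl⟩ := hP ▸ hE
    rw [ncard_coset_pow hγ (hperiod ▸ htτ) ht.ne', hperiod]

/-- Every equal-difference decomposition of `c_{n/q}(γ)` whose parts all have the same
size is the `q^t`-cyclotomic decomposition for some `t` with `ω_γ ∣ t`, `t ∣ τ`, and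
each part of size `τ / t`. -/
theorem equal_size_decomposition (n q τ : ℕ) (hn : 0 < n)
    (hq : ∃ p k : ℕ, p.Prime ∧ 0 < k ∧ q = p ^ k) (hco : Nat.Coprime q n) (γ : ZMod n)
    (hτ : cosetSize n q γ τ) (P : Set (Set (ZMod n))) (hP : IsEqDiffDecomp n q γ P)
    (hsame : ∀ E ∈ P, ∀ F ∈ P, E.ncard = F.ncard) :
    ∃ t : ℕ, omegaGamma n q γ ∣ t ∧ t ∣ τ ∧ (∀ E ∈ P, E.ncard = τ / t) ∧
      P = {E | ∃ j < t, E = coset n (q ^ t) (γ * (q : ZMod n) ^ j)} :=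
  equal_size_decomposition_general n q τ hn hco γ hτ P hP hsame
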